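/- Let G be a locally compact Hausdorff topological group and K a compact subgroup of G, with normalized Haar (probability) measure dk on K. Let d ≥ 2 be an integer, C ≥ 0 a real number, and ψ : G → ℂ a bounded continuous function admitting an M_d-decomposition of bound at most C. Define ψ̃ : G → ℂ by ψ̃(s) = ∫_K ψ(sk) dk. Then ψ̃ is continuous and constant on each left coset sK, and for every ε > 0, ψ̃ admits an M_d-decomposition of bound at most C + ε. Moreover, if ψ is compactly supported then so is ψ̃. -/

import Mathlib

open scoped ENNReal

noncomputable section

def chainApply {H : ℕ → Type} (ξ : ∀ i, H (i + 1) → H i) : ∀ n, H n → H 0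
  | 0, v => v
  | n + 1, v => chainApply ξ n (ξ n v)

def HasMdDecomp (G : Type*) [Group G] (d : ℕ) (φ : G → ℂ) (C : ℝ) : Prop :=
  ∃ (H : ℕ → Type) (_ : ∀ i, NormedAddCommGroup (H i))
    (_ : ∀ i, InnerProductSpace ℂ (H i)) (_ : ∀ i, CompleteSpace (H i))
    (e₀ : ℂ ≃ₗᵢ[ℂ] H 0) (ed : ℂ ≃ₗᵢ[ℂ] H d)
    (ξ : ∀ i, G → (H (i + 1) →L[ℂ] H i)) (M : ℕ → ℝ),
    (∀ i, i < d → ∀ t : G, ‖ξ i t‖ ≤ M i) ∧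
    (∀ t : ℕ → G,
      φ (((List.range d).map t).prod) =
        e₀.symm (chainApply (fun i => ⇑(ξ i (t i))) d (ed 1))) ∧
    (∏ i ∈ Finset.range d, M i) ≤ C

-- auxiliary lemmas

theorem chainApply_congr {H : ℕ → Type} (ξ ξ' : ∀ i, H (i + 1) → H i) :
    ∀ n, (∀ i, i < n → ξ i = ξ' i) → ∀ v, chainApply ξ n v = chainApply ξ' n v
  | 0, _, _ => rfl
  | n + 1, h, v => by
    show chainApply ξ n (ξ n v) = chainApply ξ' n (ξ' n v)
    rw [h n (Nat.lt_succ_self n)]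
    exact chainApply_congr ξ ξ' n (fun i hi => h i (hi.trans (Nat.lt_succ_self n))) _

def compChain {H : ℕ → Type} [∀ i, NormedAddCommGroup (H i)]
    [∀ i, InnerProductSpace ℂ (H i)] (ξ : ∀ i, H (i + 1) →L[ℂ] H i) :
    ∀ n, H n →L[ℂ] H 0
  | 0 => ContinuousLinearMap.id ℂ (H 0)
  | n + 1 => (compChain ξ n).comp (ξ n)

theorem chainApply_eq_compChain {H : ℕ → Type} [∀ i, NormedAddCommGroup (H i)]
    [∀ i, InnerProductSpace ℂ (H i)] (ξ : ∀ i, H (i + 1) →L[ℂ] H i) :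
    ∀ n (v : H n), chainApply (fun i => ⇑(ξ i)) n v = compChain ξ n v
  | 0, _ => rfl
  | n + 1, v => chainApply_eq_compChain ξ n (ξ n v)

theorem HasMdDecomp.mono {G : Type*} [Group G] {d : ℕ} {φ : G → ℂ} {C C' : ℝ}
    (h : HasMdDecomp G d φ C) (hCC' : C ≤ C') : HasMdDecomp G d φ C' := by
  obtain ⟨H, hN, hI, hCo, e0, ed, ξ, M, h1, h2, h3⟩ := h
  exact ⟨H, hN, hI, hCo, e0, ed, ξ, M, h1, h2, h3.trans hCC'⟩
open MeasureTheory in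
theorem hasMdDecomp_average_core {G : Type*} [Group G] [TopologicalSpace G] [IsTopologicalGroup G]
    (K : Subgroup G) (hK : IsCompact (K : Set G))
    [MeasurableSpace ↥K] [BorelSpace ↥K]
    (μ : Measure ↥K) [IsProbabilityMeasure μ]
    (m : ℕ) (C : ℝ) (ψ : G → ℂ) (hψcont : Continuous ψ)
    (H : ℕ → Type) [hN : ∀ i, NormedAddCommGroup (H i)]
    [hI : ∀ i, InnerProductSpace ℂ (H i)] [hCo : ∀ i, CompleteSpace (H i)]
    (e0 : ℂ ≃ₗᵢ[ℂ] H 0) (ed : ℂ ≃ₗᵢ[ℂ] H (m + 1))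
    (ξ : ∀ i, G → (H (i + 1) →L[ℂ] H i)) (M : ℕ → ℝ)
    (hbd : ∀ i, i < m + 1 → ∀ t : G, ‖ξ i t‖ ≤ M i)
    (hchain : ∀ t : ℕ → G,
      ψ (((List.range (m + 1)).map t).prod) =
        e0.symm (chainApply (fun i => ⇑(ξ i (t i))) (m + 1) (ed 1)))
    (hprod : (∏ i ∈ Finset.range (m + 1), M i) ≤ C) :
    HasMdDecomp G (m + 1) (fun s : G => ∫ k : ↥K, ψ (s * (k : G)) ∂μ) C := by
  classical
  haveI : CompactSpace ↥K := isCompact_iff_compactSpace.mp hK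
  have hMm : 0 ≤ M m := le_trans (norm_nonneg _) (hbd m (Nat.lt_succ_self m) 1)
  set ηv : G → H m := fun u => ξ m u (ed 1) with hηv_def
  have hηnorm : ∀ u, ‖ηv u‖ ≤ M m := by
    intro u
    calc ‖ηv u‖ ≤ ‖ξ m u‖ * ‖ed 1‖ := (ξ m u).le_opNorm _
    _ = ‖ξ m u‖ := by rw [ed.norm_map]; simp
    _ ≤ M m := hbd m (Nat.lt_succ_self m) u
  set e0c : H 0 →L[ℂ] ℂ := e0.symm.toLinearIsometry.toContinuousLinearMap with he0c
  set A : (ℕ → G) → (H m →L[ℂ] ℂ) :=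
    fun t => e0c.comp (compChain (fun i => ξ i (t i)) m) with hA
  set z : (ℕ → G) → H m := fun t => (InnerProductSpace.toDual ℂ (H m)).symm (A t) with hz
  have hzA : ∀ (t : ℕ → G) (w : H m), (inner ℂ (z t) w : ℂ) = A t w := fun t w =>
    InnerProductSpace.toDual_symm_apply
  -- the key scalar identity
  have hkey : ∀ (t : ℕ → G) (u : G),
      (inner ℂ (z t) (ηv u) : ℂ) = ψ (((List.range m).map t).prod * u) := by
    intro t u
    rw [hzA]
    have h1 := hchain (Function.update t m u)
    have hlist : (((List.range (m + 1)).map (Function.update t m u)).prod)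
        = ((List.range m).map t).prod * u := by
      rw [List.range_succ, List.map_append, List.prod_append]
      simp only [List.map_cons, List.map_nil, List.prod_cons, List.prod_nil,
        Function.update_self, mul_one]
      exact congrArg (· * u) (congrArg List.prod (List.map_congr_left fun i hi =>
        Function.update_of_ne (Nat.ne_of_lt (List.mem_range.mp hi)) u t))
    have hchain' : chainApply (fun i => ⇑(ξ i (Function.update t m u i))) (m + 1) (ed 1)
        = compChain (fun i => ξ i (t i)) m (ηv u) := by
      show chainApply (fun i => ⇑(ξ i (Function.update t m u i))) m
          ((ξ m (Function.update t m u m)) (ed 1)) = _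
      rw [Function.update_self]
      rw [chainApply_congr (fun i => ⇑(ξ i (Function.update t m u i)))
        (fun i => ⇑(ξ i (t i))) m
        (fun i hi => by simp only [Function.update_of_ne (Nat.ne_of_lt hi)])]
      exact chainApply_eq_compChain _ m _
    rw [hlist, hchain'] at h1
    rw [hA]
    simp only [ContinuousLinearMap.comp_apply, he0c,
      LinearIsometry.coe_toContinuousLinearMap, LinearIsometryEquiv.coe_toLinearIsometry]
    exact h1.symm
  -- the closed subspace
  set V : Submodule ℂ (H m) := (Submodule.span ℂ (Set.range z)).topologicalClosure with hV
  haveI : CompleteSpace ↥V := (Submodule.isClosed_topologicalClosure _).completeSpace_coe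
  have hcont_in : ∀ (t : ℕ → G) (s : G),
      Continuous fun k : ↥K => (inner ℂ (z t) (ηv (s * ↑k)) : ℂ) := by
    intro t s
    have heq : (fun k : ↥K => (inner ℂ (z t) (ηv (s * ↑k)) : ℂ))
        = fun k : ↥K => ψ (((List.range m).map t).prod * (s * ↑k)) :=
      funext fun k => hkey t (s * ↑k)
    rw [heq]
    exact hψcont.comp (continuous_const.mul (continuous_const.mul continuous_subtype_val))
  have hmeas : ∀ (s : G) (w : H m), w ∈ V →
      AEStronglyMeasurable (fun k : ↥K => (inner ℂ w (ηv (s * ↑k)) : ℂ)) μ := by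
    intro s w hw
    have hw' : w ∈ closure (Submodule.span ℂ (Set.range z) : Set (H m)) := by
      rw [← Submodule.topologicalClosure_coe]; exact hw
    obtain ⟨u, hu_mem, hu_lim⟩ := mem_closure_iff_seq_limit.mp hw'
    have hu_meas : ∀ n, AEStronglyMeasurable
        (fun k : ↥K => (inner ℂ (u n) (ηv (s * ↑k)) : ℂ)) μ := by
      intro n
      refine Submodule.span_induction
        (p := fun x _ => AEStronglyMeasurable (fun k : ↥K => (inner ℂ x (ηv (s * ↑k)) : ℂ)) μ)
        ?_ ?_ ?_ ?_ (hu_mem n)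
      · rintro x ⟨t, rfl⟩
        exact (hcont_in t s).aestronglyMeasurable
      · simp only [inner_zero_left]
        exact aestronglyMeasurable_const
      · intro x y _ _ hx' hy'
        simp only [inner_add_left]
        exact hx'.add hy'
      · intro c x _ hx'
        simp only [inner_smul_left]
        exact aestronglyMeasurable_const.mul hx'
    refine aestronglyMeasurable_of_tendsto_ae Filter.atTop hu_meas
      (Filter.Eventually.of_forall fun k => ?_)
    exact Filter.Tendsto.inner hu_lim tendsto_const_nhds
  have hint : ∀ (s : G) (w : H m), w ∈ V →
      Integrable (fun k : ↥K => (inner ℂ w (ηv (s * ↑k)) : ℂ)) μ := by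
    intro s w hw
    refine ⟨hmeas s w hw, HasFiniteIntegral.of_bounded (C := ‖w‖ * M m)
      (Filter.Eventually.of_forall fun k => ?_)⟩
    exact (norm_inner_le_norm _ _).trans
      (mul_le_mul_of_nonneg_left (hηnorm _) (norm_nonneg w))
  -- the linear functionals
  set gl : G → (↥V →ₗ[ℂ] ℂ) := fun s =>
    { toFun := fun w => (starRingEnd ℂ) (∫ k : ↥K, (inner ℂ (w : H m) (ηv (s * ↑k)) : ℂ) ∂μ)
      map_add' := by
        intro w w'
        simp only [Submodule.coe_add, inner_add_left]
        rw [integral_add (hint s w w.2) (hint s w' w'.2), map_add]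
      map_smul' := by
        intro c w
        simp only [Submodule.coe_smul, inner_smul_left, RingHom.id_apply, smul_eq_mul]
        rw [integral_const_mul, map_mul, Complex.conj_conj] } with hgl
  have hglb : ∀ (s : G) (w : ↥V), ‖gl s w‖ ≤ M m * ‖w‖ := by
    intro s w
    have h1 : ‖∫ k : ↥K, (inner ℂ (w : H m) (ηv (s * ↑k)) : ℂ) ∂μ‖
        ≤ (‖(w : H m)‖ * M m) * (μ Set.univ).toReal :=
      norm_integral_le_of_norm_le_const (Filter.Eventually.of_forall fun k =>
        (norm_inner_le_norm _ _).trans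
          (mul_le_mul_of_nonneg_left (hηnorm _) (norm_nonneg _)))
    have h2 : ‖gl s w‖ = ‖∫ k : ↥K, (inner ℂ (w : H m) (ηv (s * ↑k)) : ℂ) ∂μ‖ := by
      simp only [hgl, LinearMap.coe_mk, AddHom.coe_mk, RCLike.norm_conj]
    rw [h2]
    simpa [measure_univ, mul_comm] using h1
  set g : G → (↥V →L[ℂ] ℂ) := fun s => LinearMap.mkContinuous (gl s) (M m) (hglb s) with hg
  set v : G → ↥V := fun s => (InnerProductSpace.toDual ℂ ↥V).symm (g s) with hv
  have hvnorm : ∀ s, ‖v s‖ ≤ M m := by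
    intro s
    rw [hv]
    simp only [LinearIsometryEquiv.norm_map]
    exact LinearMap.mkContinuous_norm_le _ hMm _
  have hkey2 : ∀ (t : ℕ → G) (s : G),
      (inner ℂ (z t) ((v s : H m)) : ℂ)
        = ∫ k : ↥K, ψ (((List.range m).map t).prod * (s * ↑k)) ∂μ := by
    intro t s
    have hztV : z t ∈ V := Submodule.le_topologicalClosure _ (Submodule.subset_span ⟨t, rfl⟩)
    have h1 : (inner ℂ (v s) (⟨z t, hztV⟩ : ↥V) : ℂ) = g s ⟨z t, hztV⟩ :=
      InnerProductSpace.toDual_symm_apply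
    have h2 : (inner ℂ (z t) ((v s : H m)) : ℂ) = (starRingEnd ℂ) (g s ⟨z t, hztV⟩) := by
      rw [← h1, ← inner_conj_symm]
      rfl
    have h3 : g s ⟨z t, hztV⟩
        = (starRingEnd ℂ) (∫ k : ↥K, (inner ℂ (z t) (ηv (s * ↑k)) : ℂ) ∂μ) := rfl
    rw [h2, h3, Complex.conj_conj]
    rw [show (fun k : ↥K => (inner ℂ (z t) (ηv (s * ↑k)) : ℂ))
        = fun k : ↥K => ψ (((List.range m).map t).prod * (s * ↑k)) from
      funext fun k => hkey t (s * ↑k)]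
  -- the new last map
  set newξ : G → (H (m + 1) →L[ℂ] H m) := fun s =>
    (ContinuousLinearMap.toSpanSingleton ℂ ((v s : H m))).comp
      ed.symm.toLinearIsometry.toContinuousLinearMap with hnewξ
  have hnewξ_norm : ∀ s, ‖newξ s‖ ≤ M m := by
    intro s
    calc ‖newξ s‖ ≤ ‖ContinuousLinearMap.toSpanSingleton ℂ ((v s : H m))‖
        * ‖ed.symm.toLinearIsometry.toContinuousLinearMap‖ :=
        ContinuousLinearMap.opNorm_comp_le _ _
    _ ≤ ‖(v s : H m)‖ * 1 := by
        rw [ContinuousLinearMap.norm_toSpanSingleton]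
        exact mul_le_mul_of_nonneg_left
          (LinearIsometry.norm_toContinuousLinearMap_le _) (norm_nonneg _)
    _ ≤ M m := by rw [mul_one]; exact hvnorm s
  refine ⟨H, hN, hI, hCo, e0, ed, Function.update ξ m newξ, M, ?_, ?_, hprod⟩
  · intro i hi t
    rcases eq_or_ne i m with rfl | hne
    · rw [Function.update_self]; exact hnewξ_norm t
    · rw [Function.update_of_ne hne]; exact hbd i hi t
  · intro t
    have hprodlist : (((List.range (m + 1)).map t).prod)
        = ((List.range m).map t).prod * t m := by
      rw [List.range_succ, List.map_append, List.prod_append]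
      simp
    have hc1 : chainApply (fun i => ⇑(Function.update ξ m newξ i (t i))) (m + 1) (ed 1)
        = compChain (fun i => ξ i (t i)) m ((v (t m) : H m)) := by
      show chainApply (fun i => ⇑(Function.update ξ m newξ i (t i))) m
          ((Function.update ξ m newξ m (t m)) (ed 1)) = _
      rw [Function.update_self]
      have hval : newξ (t m) (ed 1) = ((v (t m) : H m)) := by
        simp only [hnewξ, ContinuousLinearMap.comp_apply,
          LinearIsometry.coe_toContinuousLinearMap, LinearIsometryEquiv.coe_toLinearIsometry,
          LinearIsometryEquiv.symm_apply_apply, ContinuousLinearMap.toSpanSingleton_apply,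
          one_smul]
      rw [hval]
      rw [chainApply_congr (fun i => ⇑(Function.update ξ m newξ i (t i)))
        (fun i => ⇑(ξ i (t i))) m
        (fun i hi => by simp only [Function.update_of_ne (Nat.ne_of_lt hi)])]
      exact chainApply_eq_compChain _ m _
    show (∫ k : ↥K, ψ ((((List.range (m + 1)).map t).prod) * ↑k) ∂μ) = _
    rw [hprodlist, hc1]
    have h4 : (e0.symm (compChain (fun i => ξ i (t i)) m ((v (t m) : H m))) : ℂ)
        = A t ((v (t m) : H m)) := by
      rw [hA]
      simp only [ContinuousLinearMap.comp_apply, he0c,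
        LinearIsometry.coe_toContinuousLinearMap, LinearIsometryEquiv.coe_toLinearIsometry]
    rw [h4, ← hzA, hkey2 t (t m)]
    simp only [mul_assoc]

open MeasureTheory in
theorem hasMdDecomp_average {G : Type*} [Group G] [TopologicalSpace G] [IsTopologicalGroup G]
    (K : Subgroup G) (hK : IsCompact (K : Set G))
    [MeasurableSpace ↥K] [BorelSpace ↥K]
    (μ : Measure ↥K) [IsProbabilityMeasure μ]
    (m : ℕ) (C : ℝ) (ψ : G → ℂ) (hψcont : Continuous ψ)
    (hψ : HasMdDecomp G (m + 1) ψ C) :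
    HasMdDecomp G (m + 1) (fun s : G => ∫ k : ↥K, ψ (s * (k : G)) ∂μ) C := by
  obtain ⟨H, hN, hI, hCo, e0, ed, ξ, M, hbd, hchain, hprod⟩ := hψ
  exact @hasMdDecomp_average_core G _ _ _ K hK _ _ μ _ m C ψ hψcont H hN hI hCo
    e0 ed ξ M hbd hchain hprod
/-- A topological group `G` is `M_d`-weakly amenable with constant at most `C` if for every
compact `K ⊆ G`, every `ε > 0` and every `C' > C` there is a continuous compactly supported
`φ : G → ℂ` admitting an `M_d`-decomposition of bound at most `C'` with `|φ x - 1| < ε`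
on `K`. -/
def MdWeaklyAmenableWith (G : Type*) [Group G] [TopologicalSpace G] (d : ℕ) (C : ℝ) : Prop :=
  ∀ K : Set G, IsCompact K → ∀ ε : ℝ, 0 < ε → ∀ C' : ℝ, C < C' →
    ∃ φ : G → ℂ, Continuous φ ∧ HasCompactSupport φ ∧ HasMdDecomp G d φ C' ∧
      ∀ x ∈ K, ‖φ x - 1‖ < ε

/-- The constant `Λ(G, d) ∈ [1, ∞]`: the infimum of all `C ≥ 1` such that `G` is
`M_d`-weakly amenable with constant at most `C` (`∞` if there is no such `C`). -/
def LambdaConst (G : Type*) [Group G] [TopologicalSpace G] (d : ℕ) : ℝ≥0∞ :=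
  sInf {x : ℝ≥0∞ | ∃ C : ℝ, 1 ≤ C ∧ x = ENNReal.ofReal C ∧ MdWeaklyAmenableWith G d C}

open MeasureTheory in
/-- averaging a bounded continuous `M_d`-multiplier `ψ` over a compact
subgroup `K` (with its normalized Haar probability measure) yields a continuous function
`ψ̃`, constant on left cosets of `K`, which for every `ε > 0` admits an
`M_d`-decomposition of bound at most `C + ε`; and `ψ̃` is compactly supported whenever
`ψ` is. -/
theorem md_average_over_compact_subgroup (G : Type*) [Group G] [TopologicalSpace G]
    [IsTopologicalGroup G] [LocallyCompactSpace G] [T2Space G]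
    (K : Subgroup G) (hK : IsCompact (K : Set G))
    [MeasurableSpace ↥K] [BorelSpace ↥K]
    (μ : Measure ↥K) [μ.IsMulLeftInvariant] [IsProbabilityMeasure μ]
    (d : ℕ) (hd : 2 ≤ d) (C : ℝ) (hC : 0 ≤ C)
    (ψ : G → ℂ) (hψcont : Continuous ψ) (hψbdd : ∃ M : ℝ, ∀ s : G, ‖ψ s‖ ≤ M)
    (hψ : HasMdDecomp G d ψ C) :
    Continuous (fun s : G => ∫ k : ↥K, ψ (s * (k : G)) ∂μ) ∧
    (∀ s : G, ∀ k : G, k ∈ K →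
      (∫ k' : ↥K, ψ (s * k * (k' : G)) ∂μ) = ∫ k' : ↥K, ψ (s * (k' : G)) ∂μ) ∧
    (∀ ε : ℝ, 0 < ε →
      HasMdDecomp G d (fun s : G => ∫ k : ↥K, ψ (s * (k : G)) ∂μ) (C + ε)) ∧
    (HasCompactSupport ψ →
      HasCompactSupport (fun s : G => ∫ k : ↥K, ψ (s * (k : G)) ∂μ)) := by
  haveI : CompactSpace ↥K := isCompact_iff_compactSpace.mp hK
  obtain ⟨B, hB⟩ := hψbdd
  have hBnorm : ∀ s : G, ‖ψ s‖ ≤ B := by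
    intro s; exact hB s
  refine ⟨?_, ?_, ?_, ?_⟩
  · -- continuity
    have hintb : ∀ s : G, Integrable (fun k : ↥K => ψ (s * (k : G))) μ := fun s =>
      ⟨(hψcont.comp (continuous_const.mul continuous_subtype_val)).aestronglyMeasurable,
        HasFiniteIntegral.of_bounded (C := B) (Filter.Eventually.of_forall fun k => hBnorm _)⟩
    rw [continuous_iff_continuousAt]
    intro s₀
    rw [ContinuousAt, Metric.tendsto_nhds]
    intro ε hε
    have hopen : IsOpen {p : G × ↥K | dist (ψ (p.1 * (p.2 : G))) (ψ (s₀ * (p.2 : G))) < ε / 2} := by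
      apply isOpen_lt ?_ continuous_const
      exact Continuous.dist
        (hψcont.comp (continuous_fst.mul (continuous_subtype_val.comp continuous_snd)))
        (hψcont.comp (continuous_const.mul (continuous_subtype_val.comp continuous_snd)))
    have hsub : ({s₀} ×ˢ (Set.univ : Set ↥K)) ⊆
        {p : G × ↥K | dist (ψ (p.1 * (p.2 : G))) (ψ (s₀ * (p.2 : G))) < ε / 2} := by
      rintro ⟨a, b⟩ ⟨ha, -⟩
      simp only [Set.mem_singleton_iff] at ha
      subst ha
      simp only [Set.mem_setOf_eq, dist_self]
      linarith
    obtain ⟨u, v, hu_open, _, hs₀u, hunivv, huv⟩ :=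
      generalized_tube_lemma isCompact_singleton isCompact_univ hopen hsub
    filter_upwards [hu_open.mem_nhds (hs₀u rfl)] with s hs
    have heq : (∫ k : ↥K, ψ (s * (k : G)) ∂μ) - (∫ k : ↥K, ψ (s₀ * (k : G)) ∂μ)
        = ∫ k : ↥K, (ψ (s * (k : G)) - ψ (s₀ * (k : G))) ∂μ :=
      (integral_sub (hintb s) (hintb s₀)).symm
    have hb : ‖∫ k : ↥K, (ψ (s * (k : G)) - ψ (s₀ * (k : G))) ∂μ‖
        ≤ (ε / 2) * (μ Set.univ).toReal :=
      norm_integral_le_of_norm_le_const (Filter.Eventually.of_forall fun k => by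
        have hmem := huv (Set.mk_mem_prod hs (hunivv (Set.mem_univ k)))
        simp only [Set.mem_setOf_eq] at hmem
        rw [← dist_eq_norm]
        exact hmem.le)
    have hle : dist (∫ k : ↥K, ψ (s * (k : G)) ∂μ) (∫ k : ↥K, ψ (s₀ * (k : G)) ∂μ) ≤ ε / 2 := by
      rw [dist_eq_norm, heq]
      simpa [measure_univ] using hb
    exact lt_of_le_of_lt hle (by linarith)
  · -- invariance on left cosets
    intro s k hk
    have heq : (fun k' : ↥K => ψ (s * k * (k' : G)))
        = fun k' : ↥K => (fun k'' : ↥K => ψ (s * (k'' : G))) ((⟨k, hk⟩ : ↥K) * k') := by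
      funext k'
      simp [mul_assoc]
    rw [heq, integral_mul_left_eq_self (fun k'' : ↥K => ψ (s * (k'' : G))) (⟨k, hk⟩ : ↥K)]
  · -- the decomposition
    intro ε hε
    obtain ⟨m, rfl⟩ : ∃ m, d = m + 1 := ⟨d - 1, by omega⟩
    exact (hasMdDecomp_average K hK μ m C ψ hψcont hψ).mono (by linarith)
  · -- compact support
    intro hsupp
    apply HasCompactSupport.intro (hsupp.isCompact.mul hK)
    intro x hx
    have hzero : ∀ k : ↥K, ψ (x * (k : G)) = 0 := by
      intro k
      by_contra h
      apply hx
      have hx' : x * (k : G) ∈ tsupport ψ :=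
        subset_tsupport ψ (by simpa [Function.mem_support] using h)
      have hxeq : x = (x * (k : G)) * ((k : G))⁻¹ := by group
      rw [hxeq]
      exact Set.mul_mem_mul hx' (K.inv_mem k.2)
    simp only [hzero, integral_zero]
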